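/- Let εX, εY ∈ (−1, 1). Then the characteristic polynomial of the matrix A_{C0} has exactly one real root λ₁; this root satisfies λ₁ > 0 and admits a real eigenvector of A_{C0} all of whose three coordinates are positive; and the other two roots (over ℂ) are a pair of non-real complex conjugate numbers each having negative real part. Moreover det(A_{C0}) = 1. -/

import Mathlib

open Matrix Polynomial

set_option maxHeartbeats 1000000

/-- The matrix `A_{C0}` governing the dynamics along the cycle `C₀` in logarithmic
coordinates. -/
noncomputable def AC0 (εX εY : ℝ) : Matrix (Fin 3) (Fin 3) ℝ :=
  !![-(1+εX)/2, 0, (3+εX^2)/4;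
     1, 0, (1-εX)/2;
     (1-εY)/2, 1, -(1+εY)/2 + (1-εX)*(1-εY)/4]

lemma AC0_charpoly (a b : ℝ) : (AC0 a b).charpoly =
    X^3 + C ((3+3*a+3*b-a*b)/4) * X^2 + C ((-3+3*a+3*b+a*b)/4) * X - C 1 := by
  rw [Matrix.charpoly, Matrix.det_fin_three]
  apply Polynomial.funext
  intro x
  simp [charmatrix_apply, AC0, Matrix.diagonal_apply]
  ring

lemma AC0_det (a b : ℝ) : (AC0 a b).det = 1 := by
  rw [Matrix.det_fin_three]; simp [AC0]; ring

lemma discneg (a b : ℝ) (ha1 : -1 < a) (ha2 : a < 1) (hb1 : -1 < b) (hb2 : b < 1) :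
    18 * ((3+3*a+3*b-a*b)/4) * ((-3+3*a+3*b+a*b)/4) * (-1)
      - 4 * ((3+3*a+3*b-a*b)/4)^3 * (-1)
      + ((3+3*a+3*b-a*b)/4)^2 * ((-3+3*a+3*b+a*b)/4)^2
      - 4 * ((-3+3*a+3*b+a*b)/4)^3 - 27 * (-1)^2 < 0 := by
  set T := 18 * ((3+3*a+3*b-a*b)/4) * ((-3+3*a+3*b+a*b)/4) * (-1)
      - 4 * ((3+3*a+3*b-a*b)/4)^3 * (-1)
      + ((3+3*a+3*b-a*b)/4)^2 * ((-3+3*a+3*b+a*b)/4)^2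
      - 4 * ((-3+3*a+3*b+a*b)/4)^3 - 27 * (-1:ℝ)^2 with hT
  set s := a * b with hs
  have h1 : (0:ℝ) < (1 - a^2) * (1 - b^2) :=
    mul_pos (by nlinarith) (by nlinarith)
  have hs1 : s < 1 := by nlinarith
  have hs2 : -1 < s := by nlinarith
  have hf4 : (0:ℝ) < 3375 + 3348*s + 1098*s^2 + 116*s^3 - s^4 := by
    nlinarith [sq_nonneg (1+s), sq_nonneg (s*(1+s)), sq_nonneg s]
  have hg : (0:ℝ) ≤ 64 * (1+s) * (-s^3 + 9*s^2 + 54) :=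
    mul_nonneg (by linarith) (by nlinarith)
  have hu : ((1+s)^2 - (a+b)^2) = (1 - a^2) * (1 - b^2) := by rw [hs]; ring
  have hq : (0:ℝ) < (1-s)^2 := pow_pos (by linarith) 2
  have key : -(256 * T) * (1-s)^2 =
      ((1+s)^2-(a+b)^2) * (3375 + 3348*s + 1098*s^2 + 116*s^3 - s^4)
      + (a-b)^2 * (64 * (1+s) * (-s^3 + 9*s^2 + 54))
      + 81 * (a-b)^2 * ((1+s)^2-(a+b)^2) * (1-s)^2 := by rw [hT, hs]; ring
  have hA : (0:ℝ) < ((1+s)^2-(a+b)^2) * (3375 + 3348*s + 1098*s^2 + 116*s^3 - s^4) :=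
    mul_pos (hu ▸ h1) hf4
  have hB : (0:ℝ) ≤ (a-b)^2 * (64 * (1+s) * (-s^3 + 9*s^2 + 54)) :=
    mul_nonneg (sq_nonneg _) hg
  have hC : (0:ℝ) ≤ 81 * (a-b)^2 * ((1+s)^2-(a+b)^2) * (1-s)^2 :=
    mul_nonneg (mul_nonneg (mul_nonneg (by norm_num) (sq_nonneg _)) (hu ▸ h1).le) hq.le
  have h2 : (0:ℝ) < -(256 * T) * (1-s)^2 := by rw [key]; linarith
  nlinarith [h2, hq]

theorem stmt14 (εX εY : ℝ) (hX : εX ∈ Set.Ioo (-1:ℝ) 1) (hY : εY ∈ Set.Ioo (-1:ℝ) 1) :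
    ∃ (l : ℝ) (μ : ℂ),
      0 < l ∧
      (∀ t : ℝ, (AC0 εX εY).charpoly.IsRoot t ↔ t = l) ∧
      (∃ v : Fin 3 → ℝ, (∀ i, 0 < v i) ∧ (AC0 εX εY).mulVec v = l • v) ∧
      μ.im ≠ 0 ∧ μ.re < 0 ∧
      ((AC0 εX εY).charpoly.map (algebraMap ℝ ℂ) =
        (X - C (l : ℂ)) * (X - C μ) * (X - C ((starRingEnd ℂ) μ))) ∧
      (AC0 εX εY).det = 1 := by
  obtain ⟨ha1, ha2⟩ := hX
  obtain ⟨hb1, hb2⟩ := hY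
  set a := εX
  set b := εY
  set c2 : ℝ := (3+3*a+3*b-a*b)/4 with hc2
  set c1 : ℝ := (-3+3*a+3*b+a*b)/4 with hc1
  have evalP : ∀ t : ℝ, (AC0 a b).charpoly.eval t = t^3 + c2*t^2 + c1*t - 1 := by
    intro t
    rw [AC0_charpoly]
    simp [hc2, hc1]
  -- existence of a root in [0,3]
  have hc2lb : -1 < c2 := by rw [hc2]; nlinarith
  have hc1lb : -2 < c1 := by rw [hc1]; nlinarith
  have hcont : ContinuousOn (fun t : ℝ => (AC0 a b).charpoly.eval t) (Set.Icc 0 3) :=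
    (Polynomial.continuous _).continuousOn
  have hiv := intermediate_value_Icc (by norm_num : (0:ℝ) ≤ 3) hcont
  have hmem : (0:ℝ) ∈ Set.Icc ((AC0 a b).charpoly.eval 0) ((AC0 a b).charpoly.eval 3) := by
    rw [evalP, evalP]
    constructor <;> nlinarith
  obtain ⟨l, hlmem, hleval⟩ := hiv hmem
  have hle : l^3 + c2*l^2 + c1*l - 1 = 0 := by rw [← evalP]; exact hleval
  have hl0 : 0 < l := by
    rcases lt_or_eq_of_le hlmem.1 with h | h
    · exact h
    · exfalso; rw [← h] at hle; norm_num at hle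
  -- discriminant < 0
  have hΔ : 18 * c2 * c1 * (-1) - 4 * c2^3 * (-1) + c2^2 * c1^2 - 4 * c1^3 - 27 * (-1:ℝ)^2 < 0 := by
    rw [hc2, hc1]; exact discneg a b ha1 ha2 hb1 hb2
  set cc : ℝ := l^2 + c2*l + c1 with hccdef
  have hident : 18 * c2 * c1 * (-1) - 4 * c2^3 * (-1) + c2^2 * c1^2 - 4 * c1^3 - 27 * (-1:ℝ)^2
      = (3*l^2 + 2*c2*l + c1)^2 * ((l+c2)^2 - 4*cc) := by
    rw [hccdef]
    linear_combination (27 - 4*c2^3 + 18*c1*c2 + 27*c1*l + 27*c2*l^2 + 27*l^3) * hle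
  have hD : (l+c2)^2 - 4*cc < 0 := by
    by_contra h
    push_neg at h
    nlinarith [sq_nonneg (3*l^2 + 2*c2*l + c1)]
  have hlcc : l * cc = 1 := by rw [hccdef]; linear_combination hle
  have hccpos : 0 < cc := by nlinarith
  have hqpos : ∀ t : ℝ, 0 < t^2 + (l+c2)*t + cc := by
    intro t
    nlinarith [sq_nonneg (2*t + (l+c2))]
  have hfac : ∀ t : ℝ, t^3 + c2*t^2 + c1*t - 1 = (t - l) * (t^2 + (l+c2)*t + cc) := by
    intro t
    rw [hccdef]
    linear_combination hle
  -- uniqueness of real root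
  have hroot : ∀ t : ℝ, (AC0 a b).charpoly.IsRoot t ↔ t = l := by
    intro t
    rw [Polynomial.IsRoot, evalP, hfac]
    constructor
    · intro h
      rcases mul_eq_zero.mp h with h | h
      · linarith [sub_eq_zero.mp h]
      · exact absurd h (hqpos t).ne'
    · intro h; rw [h]; ring
  -- l + c2 > 0
  have hbb : c1 * c2 > -1 := by
    have h1 : (0:ℝ) < (1 - a^2) * (1 - b^2) := mul_pos (by nlinarith) (by nlinarith)
    have hs1 : a*b < 1 := by nlinarith
    have hs2 : -1 < a*b := by nlinarith
    have key : c1*c2 + 1 = ((1+a*b)*(7-a*b) + 9*(a+b)^2)/16 := by rw [hc1, hc2]; ring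
    nlinarith [mul_pos (by linarith : (0:ℝ) < 1+a*b) (by linarith : (0:ℝ) < 7-a*b), sq_nonneg (a+b), key]
  have hr : 0 < l + c2 := by
    by_contra h
    push_neg at h
    have h2 := hfac (-c2)
    have h3 := hqpos (-c2)
    nlinarith [mul_nonneg (by linarith : (0:ℝ) ≤ -c2 - l) h3.le]
  -- eigenvector
  have hden : 0 < 4*l + 2 + 2*a := by nlinarith
  set v0 : ℝ := (3 + a^2) / (4*l + 2 + 2*a) with hv0
  set v1 : ℝ := (v0 + (1-a)/2) / l with hv1
  have hv0pos : 0 < v0 := div_pos (by nlinarith) hden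
  have hv1pos : 0 < v1 := div_pos (by nlinarith [hv0pos]) hl0
  -- complex roots
  have him2 : 0 < cc - (l+c2)^2/4 := by nlinarith
  set m : ℂ := ⟨-(l+c2)/2, Real.sqrt (cc - (l+c2)^2/4)⟩ with hm
  have hsqrtpos : 0 < Real.sqrt (cc - (l+c2)^2/4) := Real.sqrt_pos.mpr him2
  refine ⟨l, m, hl0, hroot, ?_, ?_, ?_, ?_, AC0_det a b⟩
  · -- eigenvector
    refine ⟨![v0, v1, 1], ?_, ?_⟩
    · intro i
      fin_cases i
      · exact hv0pos
      · exact hv1pos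
      · norm_num
    · have hlne : l ≠ 0 := hl0.ne'
      have hdne : 4*l+2+2*a ≠ 0 := hden.ne'
      funext i
      fin_cases i <;>
        simp only [AC0, Matrix.mulVec, dotProduct, Fin.sum_univ_three, Matrix.cons_val',
          Matrix.cons_val_zero, Matrix.cons_val_one, Matrix.head_cons, Matrix.empty_val',
          Matrix.cons_val_fin_one, Matrix.head_fin_const, Matrix.cons_val_two, Matrix.tail_cons,
          Pi.smul_apply, smul_eq_mul, Matrix.of_apply, Fin.reduceFinMk, Fin.zero_eta, Fin.mk_one]
      · rw [hv0]; field_simp [show 4*l+2+a*2 ≠ 0 by linarith]; ring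
      · rw [hv1, hv0]; field_simp; ring
      · rw [hv1, hv0]; field_simp
        have hle' : l^3 + ((3+3*a+3*b-a*b)/4)*l^2 + ((-3+3*a+3*b+a*b)/4)*l - 1 = 0 := by
          rw [← hc2, ← hc1]; exact hle
        linear_combination (-32) * hle'
  · -- im ≠ 0
    simpa [hm] using hsqrtpos.ne'
  · -- re < 0
    show -(l+c2)/2 < 0
    linarith
  · -- factorization
    have hν : (starRingEnd ℂ) m = ⟨-(l+c2)/2, -Real.sqrt (cc - (l+c2)^2/4)⟩ := by
      rw [hm]; rfl
    set ν : ℂ := (starRingEnd ℂ) m with hνdef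
    have hsq : Real.sqrt (cc - (l+c2)^2/4) * Real.sqrt (cc - (l+c2)^2/4) = cc - (l+c2)^2/4 :=
      Real.mul_self_sqrt him2.le
    have hre : m.re = -(l+c2)/2 := by rw [hm]
    have e2 : (l : ℂ) + m + ν = -(c2 : ℂ) := by
      rw [hνdef, add_assoc, Complex.add_conj, hre]
      push_cast
      ring
    have hprod : m * ν = (cc : ℂ) := by
      rw [hνdef, Complex.mul_conj]
      norm_cast
      rw [hm, Complex.normSq_mk, hsq]
      ring
    have e1 : (l : ℂ) * m + (l : ℂ) * ν + m * ν = (c1 : ℂ) := by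
      have : (l : ℂ) * m + (l : ℂ) * ν + m * ν = (l : ℂ) * ((l:ℂ) + m + ν) - (l:ℂ)^2 + m * ν := by ring
      rw [this, e2, hprod, hccdef]
      push_cast
      ring
    have e0 : (l : ℂ) * m * ν = 1 := by
      rw [mul_assoc, hprod, ← Complex.ofReal_mul, hlcc]
      norm_num
    have E2 : (C ((l:ℂ)) + C m + C ν : ℂ[X]) = -C ((c2:ℂ)) := by
      rw [← map_add, ← map_add, ← map_neg]
      exact congrArg C e2
    have E1 : (C ((l:ℂ)) * C m + C ((l:ℂ)) * C ν + C m * C ν : ℂ[X]) = C ((c1:ℂ)) := by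
      rw [← C_mul, ← C_mul, ← C_mul, ← C_add, ← C_add]
      exact congrArg C e1
    have E0 : (C ((l:ℂ)) * C m * C ν : ℂ[X]) = 1 := by
      rw [← C_mul, ← C_mul, e0, C_1]
    rw [AC0_charpoly]
    simp only [Polynomial.map_add, Polynomial.map_sub, Polynomial.map_mul, Polynomial.map_pow,
      Polynomial.map_X, Polynomial.map_C, Polynomial.map_one, Complex.coe_algebraMap]
    rw [show ((3+3*a+3*b-a*b)/4 : ℝ) = c2 from hc2.symm,
        show ((-3+3*a+3*b+a*b)/4 : ℝ) = c1 from hc1.symm, Complex.ofReal_one, C_1]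
    linear_combination (X^2 : ℂ[X]) * E2 - (X : ℂ[X]) * E1 + E0
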